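/- Let V be a commutative unital quantale and Φ a class of V-distributors satisfying (Ax1)–(Ax3). For every V-category X and every Φ-cocomplete V-category Y, composition with y^Φ_X : X → ΦX defines an equivalence of ordered sets between the Φ-cocontinuous V-functors ΦX → Y and the V-functors X → Y: (a) for every V-functor f : X → Y there exists a Φ-cocontinuous V-functor g : ΦX → Y with g ∘ y^Φ_X ≅ f; and (b) for Φ-cocontinuous V-functors g, g' : ΦX → Y, g ≤ g' if and only if g ∘ y^Φ_X ≤ g' ∘ y^Φ_X. -/

import Mathlib

universe u

/-- A commutative unital quantale: a complete lattice with a commutative monoid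
structure whose multiplication distributes over arbitrary suprema. -/
class CommQuantale (V : Type u) extends CompleteLattice V, CommMonoid V where
  mul_sSup : ∀ (x : V) (s : Set V), x * sSup s = ⨆ v ∈ s, x * v

variable {V : Type u} [CommQuantale V]

/-- The internal hom of the quantale: `qhom u v = sSup {w | u * w ≤ v}`. -/
def qhom (u v : V) : V := sSup {w | u * w ≤ v}

theorem mul_iSup' {ι : Sort*} (u : V) (v : ι → V) : u * (⨆ i, v i) = ⨆ i, u * v i := by
  rw [iSup, CommQuantale.mul_sSup, iSup_range]

theorem mul_mono_right' (u : V) {w w' : V} (h : w ≤ w') : u * w ≤ u * w' := by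
  have hs : sSup ({w, w'} : Set V) = w' := by
    apply le_antisymm
    · exact sSup_le (by rintro x (rfl | rfl); exacts [h, le_rfl])
    · exact le_sSup (by simp)
  have hm := CommQuantale.mul_sSup u ({w, w'} : Set V)
  rw [hs] at hm
  rw [hm]
  exact le_iSup₂ (f := fun v (_ : v ∈ ({w, w'} : Set V)) => u * v) w (by simp)

theorem mul_mono_left' {w w' : V} (h : w ≤ w') (u : V) : w * u ≤ w' * u := by
  rw [mul_comm w u, mul_comm w' u]; exact mul_mono_right' u h

theorem le_qhom_iff {u v w : V} : w ≤ qhom u v ↔ u * w ≤ v := by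
  constructor
  · intro h
    have h2 : u * qhom u v ≤ v := by
      rw [qhom, CommQuantale.mul_sSup]
      exact iSup₂_le fun w hw => hw
    exact le_trans (mul_mono_right' u h) h2
  · intro h; exact le_sSup h

theorem bot_mul' (u : V) : (⊥ : V) * u = ⊥ := by
  rw [mul_comm]
  have hm := CommQuantale.mul_sSup u (∅ : Set V)
  simpa using hm

/-- A `V`-category structure on `X`. -/
structure VCatStr (V : Type u) [CommQuantale V] (X : Type u) where
  hom : X → X → V
  refl : ∀ x, (1 : V) ≤ hom x x
  comp : ∀ x y z, hom x y * hom y z ≤ hom x z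

/-- `V`-functoriality. -/
def IsVFunctor {X Y : Type u} (a : VCatStr V X) (b : VCatStr V Y) (f : X → Y) : Prop :=
  ∀ x x', a.hom x x' ≤ b.hom (f x) (f x')

/-- `φ` is a `V`-distributor `(X,a) ⇸ (Y,b)`. -/
def IsDist {X Y : Type u} (a : VCatStr V X) (b : VCatStr V Y) (φ : X → Y → V) : Prop :=
  (∀ x' x y, a.hom x' x * φ x y ≤ φ x' y) ∧ (∀ x y y', φ x y * b.hom y y' ≤ φ x y')

/-- Composite `ψ ∘ φ` of distributors (`φ` first). -/
def dComp {X Y Z : Type u} (ψ : Y → Z → V) (φ : X → Y → V) : X → Z → V :=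
  fun x z => ⨆ y, φ x y * ψ y z

/-- The extension `γ ⟜ α`. -/
def dExt {X Y Z : Type u} (γ : X → Z → V) (α : X → Y → V) : Y → Z → V :=
  fun y z => ⨅ x, qhom (α x y) (γ x z)

/-- `f_*`. -/
def fStar {X Y : Type u} (b : VCatStr V Y) (f : X → Y) : X → Y → V :=
  fun x y => b.hom (f x) y

/-- `f^*`. -/
def fCostar {X Y : Type u} (b : VCatStr V Y) (f : X → Y) : Y → X → V :=
  fun y x => b.hom y (f x)

/-- `ψ ⊣ φ` is an adjunction of distributors, `ψ : (A,α) ⇸ (B,β)`, `φ : (B,β) ⇸ (A,α)`. -/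
def DistAdj {A B : Type u} (α : VCatStr V A) (β : VCatStr V B)
    (ψ : A → B → V) (φ : B → A → V) : Prop :=
  (∀ x x', α.hom x x' ≤ ⨆ y, ψ x y * φ y x') ∧
  (∀ y y', (⨆ x, φ y x * ψ x y') ≤ β.hom y y')

/-- `φ : (B,β) ⇸ (A,α)` is a right adjoint distributor. -/
def IsRightAdjDist {A B : Type u} (β : VCatStr V B) (α : VCatStr V A) (φ : B → A → V) : Prop :=
  ∃ ψ : A → B → V, IsDist α β ψ ∧ DistAdj α β ψ φ

/-- The pointwise order on `V`-functors. -/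
def VLe {X Y : Type u} (b : VCatStr V Y) (f g : X → Y) : Prop :=
  ∀ x, (1 : V) ≤ b.hom (f x) (g x)

/-- Equivalence of `V`-functors. -/
def VEquiv {X Y : Type u} (b : VCatStr V Y) (f g : X → Y) : Prop :=
  VLe b f g ∧ VLe b g f

def FullyFaithful {X Y : Type u} (a : VCatStr V X) (b : VCatStr V Y) (f : X → Y) : Prop :=
  ∀ x x', b.hom (f x) (f x') = a.hom x x'

def DenseF {X Y : Type u} (b : VCatStr V Y) (f : X → Y) : Prop :=
  ∀ y y', (⨆ x, b.hom y (f x) * b.hom (f x) y') = b.hom y y'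

/-- `f` is a left adjoint `V`-functor. -/
def LeftAdjointF {X Y : Type u} (a : VCatStr V X) (b : VCatStr V Y) (f : X → Y) : Prop :=
  ∃ g : Y → X, IsVFunctor b a g ∧ (∀ x, (1 : V) ≤ a.hom x (g (f x))) ∧
    (∀ y, (1 : V) ≤ b.hom (f (g y)) y)

/-- The one-point `V`-category `G`. -/
def unitCat (V : Type u) [CommQuantale V] : VCatStr V PUnit where
  hom _ _ := 1
  refl _ := le_refl 1
  comp _ _ _ := (one_mul 1).le

/-- Presheaves on `(X,a)`: distributors `(X,a) ⇸ G`. -/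
def IsPresheaf {X : Type u} (a : VCatStr V X) (ψ : X → V) : Prop :=
  ∀ x' x, a.hom x' x * ψ x ≤ ψ x'

/-- A class of `V`-distributors: for each pair of `V`-categories a predicate on maps. -/
def DistClass (V : Type u) [CommQuantale V] : Type (u + 1) :=
  ∀ ⦃X Y : Type u⦄, VCatStr V X → VCatStr V Y → (X → Y → V) → Prop

/-- The presheaf `ψ`, seen as distributor into `G`, lies in `Φ`. -/
def InPhi (Φ : DistClass V) {X : Type u} (a : VCatStr V X) (ψ : X → V) : Prop :=
  Φ a (unitCat V) (fun x _ => ψ x)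

/-- Axioms (Ax1)–(Ax3) on a class of distributors. -/
structure DistAx (Φ : DistClass V) : Prop where
  ax1 : ∀ {X Y : Type u} (a : VCatStr V X) (b : VCatStr V Y) (f : X → Y),
      IsVFunctor a b f → Φ b a (fCostar b f)
  ax2_left : ∀ {W X Y : Type u} (d : VCatStr V W) (a : VCatStr V X) (b : VCatStr V Y)
      (φ : W → Y → V) (f : X → Y), IsDist d b φ → IsVFunctor a b f → Φ d b φ →
      Φ d a (dComp (fCostar b f) φ)
  ax2_right : ∀ {X Y Z : Type u} (a : VCatStr V X) (b : VCatStr V Y) (c : VCatStr V Z)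
      (φ : X → Z → V) (f : X → Y), IsDist a c φ → IsVFunctor a b f → Φ a c φ →
      Φ b c (dComp φ (fCostar b f))
  ax2_star : ∀ {W X Z : Type u} (d : VCatStr V W) (a : VCatStr V X) (c : VCatStr V Z)
      (φ : X → Z → V) (f : W → X), IsDist a c φ → IsVFunctor d a f → Φ a c φ →
      Φ d a (fStar a f) → Φ d c (dComp φ (fStar a f))
  ax3 : ∀ {X Y : Type u} (a : VCatStr V X) (b : VCatStr V Y) (φ : X → Y → V),
      IsDist a b φ → (∀ y, Φ a (unitCat V) (fun x _ => φ x y)) → Φ a b φ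

/-- Axiom (Ax4): `f_* ∈ Φ` for every surjective `V`-functor `f`. -/
def Ax4 (Φ : DistClass V) : Prop :=
  ∀ {X Y : Type u} (a : VCatStr V X) (b : VCatStr V Y) (f : X → Y),
    IsVFunctor a b f → Function.Surjective f → Φ a b (fStar b f)

/-- `f` is `Φ`-dense. -/
def PhiDense (Φ : DistClass V) {X Y : Type u} (a : VCatStr V X) (b : VCatStr V Y)
    (f : X → Y) : Prop :=
  Φ a b (fStar b f)

/-- The `V`-category structure on `X → V`. -/
def funCat (V : Type u) [CommQuantale V] (X : Type u) : VCatStr V (X → V) where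
  hom ψ ψ' := ⨅ x, qhom (ψ x) (ψ' x)
  refl ψ := le_iInf fun x => le_qhom_iff.mpr (mul_one _).le
  comp ψ χ ω := le_iInf fun x => le_qhom_iff.mpr <| by
    calc ψ x * ((⨅ x', qhom (ψ x') (χ x')) * (⨅ x', qhom (χ x') (ω x')))
        = (ψ x * (⨅ x', qhom (ψ x') (χ x'))) * (⨅ x', qhom (χ x') (ω x')) :=
          (mul_assoc _ _ _).symm
      _ ≤ χ x * (⨅ x', qhom (χ x') (ω x')) :=
          mul_mono_left' (le_qhom_iff.mp (iInf_le (fun x' => qhom (ψ x') (χ x')) x)) _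
      _ ≤ ω x := le_qhom_iff.mp (iInf_le (fun x' => qhom (χ x') (ω x')) x)

/-- Full sub-`V`-category on a predicate. -/
def subCat {X : Type u} (a : VCatStr V X) (P : X → Prop) : VCatStr V {x : X // P x} where
  hom x y := a.hom x.1 y.1
  refl x := a.refl x.1
  comp x y z := a.comp x.1 y.1 z.1

/-- Carrier of the presheaf `V`-category `PX`. -/
def PCarrier {X : Type u} (a : VCatStr V X) : Type u := {ψ : X → V // IsPresheaf a ψ}

/-- The presheaf `V`-category `PX`. -/
def pCat {X : Type u} (a : VCatStr V X) : VCatStr V (PCarrier a) :=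
  subCat (funCat V X) (IsPresheaf a)

/-- Carrier of `ΦX`: presheaves lying in `Φ`. -/
def PhiCarrier (Φ : DistClass V) {X : Type u} (a : VCatStr V X) : Type u :=
  {ψ : X → V // IsPresheaf a ψ ∧ InPhi Φ a ψ}

/-- The `V`-category `ΦX`. -/
def phiCat (Φ : DistClass V) {X : Type u} (a : VCatStr V X) : VCatStr V (PhiCarrier Φ a) :=
  subCat (funCat V X) fun ψ => IsPresheaf a ψ ∧ InPhi Φ a ψ

/-- The inclusion `ΦX → PX`. -/
def phiIncl (Φ : DistClass V) {X : Type u} (a : VCatStr V X) : PhiCarrier Φ a → PCarrier a :=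
  fun ψ => ⟨ψ.1, ψ.2.1⟩

/-- The corestricted Yoneda functor `y^Φ_X : X → ΦX`. -/
def yPhi (Φ : DistClass V) (hΦ : DistAx Φ) {X : Type u} (a : VCatStr V X) (x : X) :
    PhiCarrier Φ a :=
  ⟨fun x' => a.hom x' x,
   fun x' x'' => a.comp x' x'' x,
   hΦ.ax1 (unitCat V) a (fun _ => x) (fun _ _ => a.refl x)⟩

/-- `Φf : ΦX → ΦY`, `ψ ↦ ψ ∘ f^*`. -/
def phiMap (Φ : DistClass V) (hΦ : DistAx Φ) {X Y : Type u} (a : VCatStr V X) (b : VCatStr V Y)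
    (f : X → Y) (hf : IsVFunctor a b f) (ψ : PhiCarrier Φ a) : PhiCarrier Φ b :=
  ⟨fun y => ⨆ x, b.hom y (f x) * ψ.1 x,
   by
    intro y' y
    rw [mul_iSup']
    refine iSup_le fun x => ?_
    refine le_trans ?_ (le_iSup _ x)
    calc b.hom y' y * (b.hom y (f x) * ψ.1 x)
        = (b.hom y' y * b.hom y (f x)) * ψ.1 x := (mul_assoc _ _ _).symm
      _ ≤ b.hom y' (f x) * ψ.1 x := mul_mono_left' (b.comp y' y (f x)) _,
   by
    have hd : IsDist a (unitCat V) (fun x (_ : PUnit) => ψ.1 x) :=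
      ⟨fun x' x _ => ψ.2.1 x' x, fun x _ _ => le_of_eq (mul_one _)⟩
    exact hΦ.ax2_right a b (unitCat V) _ f hd hf ψ.2.2⟩

/-- `g` is the `φ`-weighted colimit of `h`, i.e. `g_* = h_* ⟜ φ`. -/
def IsColimit {Y Z X : Type u} (_b : VCatStr V Y) (_c : VCatStr V Z) (a : VCatStr V X)
    (φ : Y → Z → V) (h : Y → X) (g : Z → X) : Prop :=
  ∀ z x, a.hom (g z) x = ⨅ y, qhom (φ y z) (a.hom (h y) x)

/-- `Φ`-cocompleteness. -/
def PhiCocomplete (Φ : DistClass V) {X : Type u} (a : VCatStr V X) : Prop :=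
  ∀ ⦃Y Z : Type u⦄ (b : VCatStr V Y) (c : VCatStr V Z) (φ : Y → Z → V) (h : Y → X),
    IsDist b c φ → Φ b c φ → IsVFunctor b a h →
    ∃ g : Z → X, IsVFunctor c a g ∧ IsColimit b c a φ h g

/-- `Φ`-cocontinuity. -/
def PhiCocontinuous (Φ : DistClass V) {X X' : Type u} (a : VCatStr V X) (a' : VCatStr V X')
    (f : X → X') : Prop :=
  ∀ ⦃Y Z : Type u⦄ (b : VCatStr V Y) (c : VCatStr V Z) (φ : Y → Z → V) (h : Y → X) (g : Z → X),
    IsDist b c φ → Φ b c φ → IsVFunctor b a h → IsVFunctor c a g →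
    IsColimit b c a φ h g → IsColimit b c a' φ (f ∘ h) (f ∘ g)

/-- `Φ`-injectivity. -/
def PhiInjective (Φ : DistClass V) {X : Type u} (a : VCatStr V X) : Prop :=
  ∀ ⦃A B : Type u⦄ (α : VCatStr V A) (β : VCatStr V B) (f : A → X) (i : A → B),
    IsVFunctor α a f → IsVFunctor α β i → FullyFaithful α β i → PhiDense Φ α β i →
    ∃ g : B → X, IsVFunctor β a g ∧ VEquiv a (g ∘ i) f

/-- Separatedness. -/
def Separated {X : Type u} (a : VCatStr V X) : Prop :=
  ∀ ⦃Y : Type u⦄ (b : VCatStr V Y) (f g : Y → X),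
    IsVFunctor b a f → IsVFunctor b a g → VEquiv a f g → f = g

/-!
Every `ψ ∈ ΦX` is the `ψ`-weighted colimit of the Yoneda functor, so a `Φ`-cocontinuous
`g : ΦX → Y` is the colimit of `g ∘ y` weighted by `y_* = (x, ψ) ↦ ψ x`; as colimits are monotone
in the diagram, this gives (b). For (a), `y_*` lies in `Φ` by (Ax3), so `g := colim(y_*, f)` exists
in `Y`, and `g ∘ y ≅ f` by the Yoneda lemma. It is `Φ`-cocontinuous because a colimit `ℓ` of
`h : W → ΦX` weighted by `φ` is the pointwise one, `ℓ z = ⨆ w, h w ⊗ φ(w, z)`: by (Ax2) this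
presheaf lies in `Φ`, and it has the universal property of `ℓ z` against every object of `ΦX`.
-/

theorem one_le_qhom_iff {u v : V} : 1 ≤ qhom u v ↔ u ≤ v := by
  rw [le_qhom_iff, mul_one]

theorem iSup_mul' {ι : Sort*} (v : ι → V) (u : V) : (⨆ i, v i) * u = ⨆ i, v i * u := by
  simp only [mul_comm _ u]
  exact mul_iSup' u v

theorem mul_le_mul'' {u u' w w' : V} (hu : u ≤ u') (hw : w ≤ w') : u * w ≤ u' * w' :=
  (mul_mono_left' hu w).trans (mul_mono_right' u' hw)

section Distributors

variable {W X Y Z : Type u}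

theorem one_le_funCat_hom_iff {ψ ψ' : X → V} :
    1 ≤ (funCat V X).hom ψ ψ' ↔ ∀ x, ψ x ≤ ψ' x :=
  le_iInf_iff.trans (forall_congr' fun _ => one_le_qhom_iff)

theorem funCat_hom_yoneda {a : VCatStr V X} {χ : X → V} (hχ : IsPresheaf a χ) (x : X) :
    (funCat V X).hom (fun x' => a.hom x' x) χ = χ x := by
  apply le_antisymm
  · calc (funCat V X).hom (fun x' => a.hom x' x) χ
        ≤ a.hom x x * qhom (a.hom x x) (χ x) := by
          rw [← one_mul ((funCat V X).hom _ χ)]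
          exact mul_le_mul'' (a.refl x) (iInf_le _ x)
      _ ≤ χ x := le_qhom_iff.mp le_rfl
  · exact le_iInf fun x' => le_qhom_iff.mpr (hχ x' x)

theorem funCat_hom_dComp (p : X → W → V) (φ : W → Z → V) (z : Z) (χ : X → V) :
    (funCat V X).hom (fun x => dComp φ p x z) χ =
      ⨅ w, qhom (φ w z) ((funCat V X).hom (fun x => p x w) χ) := by
  refine eq_of_forall_le_iff fun t => ?_
  simp only [funCat, dComp, le_iInf_iff, le_qhom_iff, iSup_mul', iSup_le_iff, mul_assoc]
  exact forall_comm

theorem isDist_fStar {a : VCatStr V X} {b : VCatStr V Y} {f : X → Y}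
    (hf : IsVFunctor a b f) : IsDist a b (fStar b f) :=
  ⟨fun x' x y => (mul_mono_left' (hf x' x) _).trans (b.comp (f x') (f x) y),
   fun x y y' => b.comp (f x) y y'⟩

theorem isDist_fCostar {a : VCatStr V X} {b : VCatStr V Y} {f : X → Y}
    (hf : IsVFunctor a b f) : IsDist b a (fCostar b f) :=
  ⟨fun y' y x => b.comp y' y (f x),
   fun y x x' => (mul_mono_right' _ (hf x x')).trans (b.comp y (f x) (f x'))⟩

theorem isDist_dComp {a : VCatStr V X} {b : VCatStr V Y} {c : VCatStr V Z}
    {φ : X → Y → V} {ψ : Y → Z → V} (hφ : IsDist a b φ) (hψ : IsDist b c ψ) :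
    IsDist a c (dComp ψ φ) := by
  constructor
  · intro x' x z
    rw [dComp, mul_iSup']
    refine iSup_le fun y => le_iSup_of_le y ?_
    rw [← mul_assoc]
    exact mul_mono_left' (hφ.1 x' x y) _
  · intro x z z'
    rw [dComp, iSup_mul']
    refine iSup_le fun y => le_iSup_of_le y ?_
    rw [mul_assoc]
    exact mul_mono_right' _ (hψ.2 y z z')

theorem dComp_assoc (φ : W → X → V) (ψ : X → Y → V) (χ : Y → Z → V) :
    dComp χ (dComp ψ φ) = dComp (dComp χ ψ) φ := by
  funext w z
  simp only [dComp, iSup_mul', mul_iSup', mul_assoc]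
  exact iSup_comm

theorem dComp_fCostar {a : VCatStr V X} {b : VCatStr V Y} {φ : X → Y → V}
    (hφ : IsDist a b φ) (f : W → Y) : dComp (fCostar b f) φ = fun x w => φ x (f w) := by
  funext x w
  refine le_antisymm (iSup_le fun y => hφ.2 x y (f w)) (le_iSup_of_le (f w) ?_)
  calc φ x (f w) = φ x (f w) * 1 := (mul_one _).symm
    _ ≤ φ x (f w) * b.hom (f w) (f w) := mul_mono_right' _ (b.refl _)

theorem IsColimit.mono {b : VCatStr V Y} {c : VCatStr V Z} {a : VCatStr V X}
    {φ : Y → Z → V} {h h' : Y → X} {g g' : Z → X}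
    (hg : IsColimit b c a φ h g) (hg' : IsColimit b c a φ h' g') (hle : VLe a h h') :
    VLe a g g' := by
  intro z
  rw [hg z (g' z)]
  refine le_iInf fun y => one_le_qhom_iff.mpr ?_
  have hφ : φ y z ≤ a.hom (h' y) (g' z) :=
    one_le_qhom_iff.mp (((a.refl (g' z)).trans (hg' z (g' z)).le).trans (iInf_le _ y))
  calc φ y z = 1 * φ y z := (one_mul _).symm
    _ ≤ a.hom (h y) (h' y) * a.hom (h' y) (g' z) := mul_le_mul'' (hle y) hφ
    _ ≤ a.hom (h y) (g' z) := a.comp _ _ _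

end Distributors

section PhiPresheaves

variable {Φ : DistClass V} {W X Y Z : Type u}

theorem inPhi_of_mem (hΦ : DistAx Φ) {a : VCatStr V X} {c : VCatStr V Z} {φ : X → Z → V}
    (hφ : IsDist a c φ) (hφΦ : Φ a c φ) (z : Z) : InPhi Φ a fun x => φ x z := by
  have h := hΦ.ax2_left a (unitCat V) c φ (fun _ => z) hφ (fun _ _ => c.refl z) hφΦ
  rw [dComp_fCostar hφ] at h
  exact h

theorem yPhi_isVFunctor (hΦ : DistAx Φ) (a : VCatStr V X) :
    IsVFunctor a (phiCat Φ a) (yPhi Φ hΦ a) :=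
  fun x x' => le_iInf fun x'' => le_qhom_iff.mpr (a.comp x'' x x')

theorem phiCat_hom_yPhi (hΦ : DistAx Φ) (a : VCatStr V X) (x : X) (ψ : PhiCarrier Φ a) :
    (phiCat Φ a).hom (yPhi Φ hΦ a x) ψ = ψ.1 x :=
  funCat_hom_yoneda ψ.2.1 x

theorem fStar_yPhi (hΦ : DistAx Φ) (a : VCatStr V X) :
    fStar (phiCat Φ a) (yPhi Φ hΦ a) = fun x ψ => ψ.1 x :=
  funext fun x => funext (phiCat_hom_yPhi hΦ a x)

variable (Φ) in
theorem isDist_eval (a : VCatStr V X) : IsDist a (phiCat Φ a) fun x ψ => ψ.1 x :=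
  ⟨fun x' x ψ => ψ.2.1 x' x,
   fun x _ _ => (mul_mono_right' _ (iInf_le _ x)).trans (le_qhom_iff.mp le_rfl)⟩

theorem phi_eval (hΦ : DistAx Φ) (a : VCatStr V X) : Φ a (phiCat Φ a) fun x ψ => ψ.1 x :=
  hΦ.ax3 _ _ _ (isDist_eval Φ a) fun ψ => ψ.2.2

theorem isColimit_eval_yPhi (hΦ : DistAx Φ) (a : VCatStr V X) :
    IsColimit a (phiCat Φ a) (phiCat Φ a) (fun x ψ => ψ.1 x) (yPhi Φ hΦ a) id := by
  intro ψ χ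
  simp only [phiCat_hom_yPhi]
  rfl

theorem isDist_dComp_eval (hΦ : DistAx Φ) {a : VCatStr V X} {d : VCatStr V W}
    {c : VCatStr V Z} {φ : W → Z → V} {h : W → PhiCarrier Φ a}
    (hφ : IsDist d c φ) (hφΦ : Φ d c φ) (hh : IsVFunctor d (phiCat Φ a) h) :
    IsDist a c (dComp φ fun x w => (h w).1 x) ∧ Φ a c (dComp φ fun x w => (h w).1 x) := by
  rw [← dComp_fCostar (isDist_eval Φ a) h, dComp_assoc]
  have hθ := isDist_dComp (isDist_fCostar hh) hφ
  refine ⟨isDist_dComp (isDist_eval Φ a) hθ, ?_⟩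
  have hΦθ := hΦ.ax2_star a (phiCat Φ a) c _ (yPhi Φ hΦ a) hθ (yPhi_isVFunctor hΦ a)
    (hΦ.ax2_right d _ c φ h hφ hh hφΦ) (by rw [fStar_yPhi]; exact phi_eval hΦ a)
  rwa [fStar_yPhi] at hΦθ

theorem IsColimit.phiCat_eq (hΦ : DistAx Φ) {a : VCatStr V X} {d : VCatStr V W}
    {c : VCatStr V Z} {φ : W → Z → V} {h : W → PhiCarrier Φ a} {ℓ : Z → PhiCarrier Φ a}
    (hφ : IsDist d c φ) (hφΦ : Φ d c φ) (hh : IsVFunctor d (phiCat Φ a) h)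
    (hℓ : IsColimit d c (phiCat Φ a) φ h ℓ) (z : Z) :
    (ℓ z).1 = fun x => dComp φ (fun x w => (h w).1 x) x z := by
  obtain ⟨hΨ, hΦΨ⟩ := isDist_dComp_eval hΦ hφ hφΦ hh
  let ψ : PhiCarrier Φ a := ⟨_, fun x' x => hΨ.1 x' x z, inPhi_of_mem hΦ hΨ hΦΨ z⟩
  have hom_eq (χ : PhiCarrier Φ a) :
      (phiCat Φ a).hom (ℓ z) χ = (funCat V X).hom ψ.1 χ.1 :=
    (hℓ z χ).trans (funCat_hom_dComp _ φ z χ.1).symm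
  have hle : ∀ x, (ℓ z).1 x ≤ ψ.1 x :=
    one_le_funCat_hom_iff.mp (((funCat V X).refl ψ.1).trans (hom_eq ψ).ge)
  have hge : ∀ x, ψ.1 x ≤ (ℓ z).1 x :=
    one_le_funCat_hom_iff.mp (((phiCat Φ a).refl (ℓ z)).trans (hom_eq (ℓ z)).le)
  exact funext fun x => le_antisymm (hle x) (hge x)

theorem IsColimit.phiCocontinuous (hΦ : DistAx Φ) {a : VCatStr V X} {b : VCatStr V Y}
    {f : X → Y} {g : PhiCarrier Φ a → Y}
    (hg : IsColimit a (phiCat Φ a) b (fun x ψ => ψ.1 x) f g) :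
    PhiCocontinuous Φ (phiCat Φ a) b g := by
  intro W Z d c φ h ℓ hφ hφΦ hh _ hℓ z y
  calc b.hom (g (ℓ z)) y = (funCat V X).hom (ℓ z).1 (fun x => b.hom (f x) y) := hg (ℓ z) y
    _ = ⨅ w, qhom (φ w z) ((funCat V X).hom (h w).1 (fun x => b.hom (f x) y)) := by
      rw [hℓ.phiCat_eq hΦ hφ hφΦ hh z, funCat_hom_dComp]
    _ = ⨅ w, qhom (φ w z) (b.hom ((g ∘ h) w) y) :=
      iInf_congr fun w => by rw [Function.comp_apply, hg (h w) y]; rfl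

theorem IsColimit.vEquiv_comp_yPhi (hΦ : DistAx Φ) {a : VCatStr V X} {b : VCatStr V Y}
    {f : X → Y} {g : PhiCarrier Φ a → Y} (hf : IsVFunctor a b f)
    (hg : IsColimit a (phiCat Φ a) b (fun x ψ => ψ.1 x) f g) :
    VEquiv b (g ∘ yPhi Φ hΦ a) f := by
  have hom_eq (x : X) (y : Y) : b.hom (g (yPhi Φ hΦ a x)) y = b.hom (f x) y :=
    (hg _ y).trans (funCat_hom_yoneda (fun x' x'' => (isDist_fStar hf).1 x' x'' y) x)
  exact ⟨fun x => (hom_eq x (f x)).symm ▸ b.refl (f x),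
    fun x => hom_eq x (g (yPhi Φ hΦ a x)) ▸ b.refl _⟩

theorem PhiCocontinuous.isColimit_eval (hΦ : DistAx Φ) {a : VCatStr V X} {b : VCatStr V Y}
    {g : PhiCarrier Φ a → Y} (hg : PhiCocontinuous Φ (phiCat Φ a) b g) :
    IsColimit a (phiCat Φ a) b (fun x ψ => ψ.1 x) (g ∘ yPhi Φ hΦ a) g :=
  hg a (phiCat Φ a) _ (yPhi Φ hΦ a) id (isDist_eval Φ a) (phi_eval hΦ a)
    (yPhi_isVFunctor hΦ a) (fun _ _ => le_rfl) (isColimit_eval_yPhi hΦ a)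

end PhiPresheaves

/-- Composition with `y^Φ_X` is an equivalence of ordered sets between
`Φ`-cocontinuous functors `ΦX → Y` and functors `X → Y`, for `Y` `Φ`-cocomplete. -/
theorem stmt16 (Φ : DistClass V) (hΦ : DistAx Φ) {X Y : Type u}
    (a : VCatStr V X) (b : VCatStr V Y) (hYc : PhiCocomplete Φ b) :
    (∀ f : X → Y, IsVFunctor a b f →
      ∃ g : PhiCarrier Φ a → Y, IsVFunctor (phiCat Φ a) b g ∧
        PhiCocontinuous Φ (phiCat Φ a) b g ∧ VEquiv b (g ∘ yPhi Φ hΦ a) f) ∧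
    (∀ g g' : PhiCarrier Φ a → Y,
      IsVFunctor (phiCat Φ a) b g → IsVFunctor (phiCat Φ a) b g' →
      PhiCocontinuous Φ (phiCat Φ a) b g → PhiCocontinuous Φ (phiCat Φ a) b g' →
      (VLe b g g' ↔ VLe b (g ∘ yPhi Φ hΦ a) (g' ∘ yPhi Φ hΦ a))) := by
  refine ⟨fun f hf => ?_, fun g g' _ _ hgc hg'c => ?_⟩
  · obtain ⟨g, hg, hcol⟩ := hYc a (phiCat Φ a) _ f (isDist_eval Φ a) (phi_eval hΦ a) hf
    exact ⟨g, hg, hcol.phiCocontinuous hΦ, hcol.vEquiv_comp_yPhi hΦ hf⟩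
  · exact ⟨fun hle x => hle _, (hgc.isColimit_eval hΦ).mono (hg'c.isColimit_eval hΦ)⟩
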